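/- For a fusion frame sequence W = ((W_i, c_i))_{i∈I}, the canonical dual of the associated operator-valued frame sequence (c_i P_{W_i})_{i∈I} corresponds again to a fusion frame sequence if and only if W is a union of mutually orthogonal tight fusion frame sequences, i.e., there is a partition I = ⋃_j I_j such that each ((W_i, c_i))_{i∈I_j} is a tight fusion frame sequence and the spans of the families for different j are mutually orthogonal. -/

import Mathlib

/-!
Let `S` be the fusion frame operator and `G = (S|_{H_W})⁻¹ P_W`; then `G` is self-adjoint and
injective on `H_W`.

If `cᵢ P_{Wᵢ} G = d P` with `P` an orthogonal projection, then `P_{Wᵢ} G` is self-adjoint, hence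
equal to `G P_{Wᵢ}`. So `G` preserves `Wᵢ` and satisfies `G² = λ G` there, and injectivity forces
`G = λ` on `Wᵢ`: every `Wᵢ` lies in an eigenspace of `S`, with positive eigenvalue by the lower
frame bound. Grouping the `Wᵢ` by eigenvalue gives the decomposition, since eigenspaces of the
self-adjoint `S` are closed and mutually orthogonal, and on the eigenspace for `t` the frame sum
is `⟪x, S x⟫ = t ‖x‖²`.

Conversely, on the closed span `V` of a tight block with bound `a`, `S` leaves `V` invariant and
`⟪x, S x⟫ = a ‖x‖²`, so `S = a` on `V` by polarization and `G = a⁻¹` on `V`. Then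
`P_{Wᵢ} G = (G P_{Wᵢ})* = a⁻¹ P_{Wᵢ}` for every `Wᵢ` in the block.
-/

open ContinuousLinearMap

/-- The orthogonal projection of `H` onto a complete subspace `W`, viewed as an
operator `H →L[ℂ] H`. -/
noncomputable def proj {H : Type*} [NormedAddCommGroup H] [InnerProductSpace ℂ H]
    (W : Submodule ℂ H) [CompleteSpace W] : H →L[ℂ] H :=
  W.subtypeL.comp (Submodule.orthogonalProjection W)

open scoped InnerProductSpace
open Module.End (eigenspace mem_eigenspace_iff)

theorem proj_eq_starProjection {H : Type*} [NormedAddCommGroup H] [InnerProductSpace ℂ H]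
    (W : Submodule ℂ H) [CompleteSpace W] : proj W = W.starProjection := rfl

theorem isSelfAdjoint_ofReal (r : ℝ) : IsSelfAdjoint (r : ℂ) :=
  isSelfAdjoint_iff.2 (Complex.conj_ofReal r)

theorem Submodule.le_topologicalClosure_biSup {R M ι : Type*} [Semiring R] [TopologicalSpace M]
    [AddCommMonoid M] [Module R M] [ContinuousConstSMul R M] [ContinuousAdd M]
    {W : ι → Submodule R M} {s : Set ι} {i : ι} (hi : i ∈ s) :
    W i ≤ (⨆ k ∈ s, W k).topologicalClosure :=
  (le_iSup₂ (f := fun k _ => W k) i hi).trans (Submodule.le_topologicalClosure _)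

section InnerProductSpace

variable {H : Type*} [NormedAddCommGroup H] [InnerProductSpace ℂ H]

theorem inner_self_eq_ofReal_norm_sq (x : H) : ⟪x, x⟫_ℂ = ((‖x‖ ^ 2 : ℝ) : ℂ) := by
  rw [inner_self_eq_norm_sq_to_K]
  push_cast
  rfl

theorem inner_starProjection_self (K : Submodule ℂ H) [K.HasOrthogonalProjection] (x : H) :
    ⟪x, K.starProjection x⟫_ℂ = ((‖K.starProjection x‖ ^ 2 : ℝ) : ℂ) := by
  calc ⟪x, K.starProjection x⟫_ℂ = ⟪x, K.starProjection (K.starProjection x)⟫_ℂ := by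
        rw [K.starProjection_eq_self_iff.2 (K.starProjection_apply_mem x)]
    _ = ((‖K.starProjection x‖ ^ 2 : ℝ) : ℂ) := by
        rw [← K.inner_starProjection_left_eq_right, inner_self_eq_ofReal_norm_sq]

theorem apply_eq_smul_of_inner_self_eq {T : H →ₗ[ℂ] H} {K : Submodule ℂ H}
    (hK : ∀ x ∈ K, T x ∈ K) {a : ℂ} (h : ∀ x ∈ K, ⟪x, T x⟫_ℂ = ⟪x, a • x⟫_ℂ)
    {x : H} (hx : x ∈ K) : T x = a • x := by
  have hT : T.restrict hK = a • LinearMap.id := by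
    refine (ext_inner_map _ _).1 fun y => ?_
    simpa only [Submodule.coe_inner, inner_conj_symm, LinearMap.coe_restrict_apply,
      LinearMap.smul_apply, LinearMap.id_apply, Submodule.coe_smul]
      using congrArg (starRingEnd ℂ) (h y y.2)
  exact congrArg Subtype.val (LinearMap.congr_fun hT ⟨x, hx⟩)

theorem topologicalClosure_biSup_le_eigenspace {I : Type*} {W : I → Submodule ℂ H}
    (S : H →L[ℂ] H) {μ : I → ℝ} (hW : ∀ i, W i ≤ eigenspace (S : H →ₗ[ℂ] H) (μ i)) (t : ℝ) :
    (⨆ i ∈ {i | μ i = t}, W i).topologicalClosure ≤ eigenspace (S : H →ₗ[ℂ] H) t :=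
  Submodule.topologicalClosure_minimal _ (iSup₂_le fun i hi => hi ▸ hW i)
    (ContinuousLinearMap.isClosed_eigenspace S t)

end InnerProductSpace

section Compression

variable {H : Type*} [NormedAddCommGroup H] [InnerProductSpace ℂ H] [CompleteSpace H]
  {W : Submodule ℂ H} [W.HasOrthogonalProjection] {G : H →L[ℂ] H}

theorem starProjection_comp_eq_smul_of_apply_eq_smul (hG : IsSelfAdjoint G) {r : ℝ}
    (h : ∀ x ∈ W, G x = (r : ℂ) • x) : W.starProjection ∘L G = (r : ℂ) • W.starProjection := by
  have hGP : G ∘L W.starProjection = (r : ℂ) • W.starProjection :=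
    ext fun x => h _ (W.starProjection_apply_mem x)
  calc W.starProjection ∘L G = adjoint (G ∘L W.starProjection) := by
        rw [adjoint_comp, hG.adjoint_eq, (isSelfAdjoint_starProjection W).adjoint_eq]
    _ = (r : ℂ) • W.starProjection := by
        rw [hGP, ((isSelfAdjoint_ofReal r).smul (isSelfAdjoint_starProjection W)).adjoint_eq]

theorem apply_eq_smul_of_starProjection_comp_eq_smul (hG : IsSelfAdjoint G)
    (hinj : ∀ x ∈ W, G x = 0 → x = 0) {P : H →L[ℂ] H} (hP : IsStarProjection P) {r : ℝ}
    (h : W.starProjection ∘L G = (r : ℂ) • P) {x : H} (hx : x ∈ W) : G x = (r : ℂ) • x := by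
  set A := W.starProjection ∘L G with hA
  have hGA : ∀ y ∈ W, G y = A y := by
    have hAsa : IsSelfAdjoint A := h ▸ (isSelfAdjoint_ofReal r).smul hP.isSelfAdjoint
    intro y hy
    rw [← hAsa.adjoint_eq, hA, adjoint_comp, hG.adjoint_eq,
      (isSelfAdjoint_starProjection W).adjoint_eq, comp_apply, W.starProjection_eq_self_iff.2 hy]
  have hAA : ∀ y, A (A y) = (r : ℂ) • A y := fun y => by
    rw [h, smul_apply, smul_apply, map_smul, ← mul_apply_eq_comp,
      hP.isIdempotentElem.eq]
  have hGxW : G x ∈ W := hGA x hx ▸ W.starProjection_apply_mem (G x)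
  refine sub_eq_zero.1 (hinj _ (W.sub_mem hGxW (W.smul_mem _ hx)) ?_)
  rw [map_sub, map_smul, hGA _ hGxW, hGA x hx, hAA, sub_self]

end Compression

section RightInverse

variable {H : Type*} [NormedAddCommGroup H] [InnerProductSpace ℂ H]

/-- When `S` is injective on `K`, this pins down `G = (S|_K)⁻¹ P_K`. -/
structure IsRightInverseOn (K : Submodule ℂ H) [K.HasOrthogonalProjection] (S G : H →L[ℂ] H) :
    Prop where
  apply_mem : ∀ x, G x ∈ K
  comp_eq : S ∘L G = K.starProjection

namespace IsRightInverseOn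

variable {K : Submodule ℂ H} [K.HasOrthogonalProjection] {S G : H →L[ℂ] H}

theorem apply_apply (hG : IsRightInverseOn K S G) {x : H} (hx : x ∈ K) : S (G x) = x := by
  rw [← comp_apply, hG.comp_eq, K.starProjection_eq_self_iff.2 hx]

theorem eq_zero_of_apply_eq_zero (hG : IsRightInverseOn K S G) {x : H} (hx : x ∈ K)
    (h : G x = 0) : x = 0 := by
  rw [← hG.apply_apply hx, h, map_zero]

theorem apply_left_eq_inv_smul (hG : IsRightInverseOn K S G) {x : H} (hx : x ∈ K) {r : ℂ}
    (h : G x = r • x) : S x = r⁻¹ • x := by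
  have hr : r • S x = x := by rw [← map_smul, ← h, hG.apply_apply hx]
  rcases eq_or_ne r 0 with rfl | hr0
  · rw [zero_smul] at hr
    simp [← hr]
  · exact (eq_inv_smul_iff₀ hr0).2 hr

theorem apply_right_eq_inv_smul (hG : IsRightInverseOn K S G)
    (hS : ∀ x ∈ K, S x = 0 → x = 0) {x : H} (hx : x ∈ K) {r : ℂ} (hr : r ≠ 0)
    (h : S x = r • x) : G x = r⁻¹ • x := by
  refine sub_eq_zero.1 (hS _ (K.sub_mem (hG.apply_mem x) (K.smul_mem _ hx)) ?_)
  rw [map_sub, map_smul, hG.apply_apply hx, h, smul_smul, inv_mul_cancel₀ hr, one_smul, sub_self]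

theorem isSymmetric (hG : IsRightInverseOn K S G) (hS : (S : H →ₗ[ℂ] H).IsSymmetric) :
    (G : H →ₗ[ℂ] H).IsSymmetric := by
  intro x y
  have hPG : ∀ z, K.starProjection (G z) = G z := fun z =>
    K.starProjection_eq_self_iff.2 (hG.apply_mem z)
  calc ⟪G x, y⟫_ℂ = ⟪G x, S (G y)⟫_ℂ := by
        rw [← comp_apply, hG.comp_eq, ← K.inner_starProjection_left_eq_right, hPG]
    _ = ⟪S (G x), G y⟫_ℂ := (hS _ _).symm
    _ = ⟪x, G y⟫_ℂ := by
        rw [← comp_apply, hG.comp_eq, K.inner_starProjection_left_eq_right, hPG]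

end IsRightInverseOn

end RightInverse

section FrameOperator

variable {H : Type*} [NormedAddCommGroup H] [InnerProductSpace ℂ H] {I : Type*}

def IsFusionFrameOperator (W : I → Submodule ℂ H) [∀ i, (W i).HasOrthogonalProjection]
    (c : I → ℝ) (S : H →L[ℂ] H) : Prop :=
  ∀ x, HasSum (fun i => ((c i ^ 2 : ℝ) : ℂ) • (W i).starProjection x) (S x)

theorem tsum_subtype_eq_tsum_of_mem_orthogonal (W : I → Submodule ℂ H)
    [∀ i, (W i).HasOrthogonalProjection] (c : I → ℝ) (s : Set I) {x : H}
    (hx : ∀ i ∉ s, x ∈ (W i)ᗮ) :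
    ∑' i : s, c i ^ 2 * ‖(W i).starProjection x‖ ^ 2 =
      ∑' i, c i ^ 2 * ‖(W i).starProjection x‖ ^ 2 := by
  refine tsum_subtype_eq_of_support_subset
    (f := fun i => c i ^ 2 * ‖(W i).starProjection x‖ ^ 2) fun i hi => ?_
  by_contra his
  simp [(W i).starProjection_apply_eq_zero_iff.2 (hx i his)] at hi

namespace IsFusionFrameOperator

variable {W : I → Submodule ℂ H} [∀ i, (W i).HasOrthogonalProjection] {c : I → ℝ}
  {S : H →L[ℂ] H}

theorem hasSum_inner_self (hS : IsFusionFrameOperator W c S) (x : H) :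
    HasSum (fun i => ((c i ^ 2 * ‖(W i).starProjection x‖ ^ 2 : ℝ) : ℂ)) ⟪x, S x⟫_ℂ := by
  simpa [inner_smul_right, inner_starProjection_self] using (hS x).mapL (innerSL ℂ x)

theorem inner_self_eq_tsum (hS : IsFusionFrameOperator W c S) (x : H) :
    ⟪x, S x⟫_ℂ = ((∑' i, c i ^ 2 * ‖(W i).starProjection x‖ ^ 2 : ℝ) : ℂ) := by
  rw [Complex.ofReal_tsum, (hS.hasSum_inner_self x).tsum_eq]

theorem tsum_eq_of_apply_eq_smul (hS : IsFusionFrameOperator W c S) {x : H} {t : ℝ}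
    (hx : S x = (t : ℂ) • x) :
    ∑' i, c i ^ 2 * ‖(W i).starProjection x‖ ^ 2 = t * ‖x‖ ^ 2 := by
  have h := hS.inner_self_eq_tsum x
  rw [hx, inner_smul_right, inner_self_eq_ofReal_norm_sq] at h
  exact_mod_cast h.symm

theorem isSymmetric (hS : IsFusionFrameOperator W c S) : (S : H →ₗ[ℂ] H).IsSymmetric := by
  intro x y
  have hx : HasSum (fun i => ⟪((c i ^ 2 : ℝ) : ℂ) • (W i).starProjection x, y⟫_ℂ) ⟪S x, y⟫_ℂ := by
    simpa only [innerSL_apply_apply, inner_conj_symm]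
      using Complex.hasSum_conj'.2 ((hS x).mapL (innerSL ℂ y))
  simp_rw [inner_smul_left, Complex.conj_ofReal, Submodule.inner_starProjection_left_eq_right,
    ← inner_smul_right] at hx
  exact hx.unique ((hS y).mapL (innerSL ℂ x))

theorem apply_mem (hS : IsFusionFrameOperator W c S) {K : Submodule ℂ H}
    (hK : IsClosed (K : Set H)) {x : H} (hx : ∀ i, (W i).starProjection x ∈ K) : S x ∈ K :=
  hK.mem_of_tendsto (hS x) <| .of_forall fun _ => K.sum_mem fun i _ => K.smul_mem _ (hx i)

section LowerBound

variable {K : Submodule ℂ H} {α : ℝ}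

theorem pos_of_apply_eq_smul (hS : IsFusionFrameOperator W c S) (hα : 0 < α)
    (hK : ∀ x ∈ K, α * ‖x‖ ^ 2 ≤ ∑' i, c i ^ 2 * ‖(W i).starProjection x‖ ^ 2)
    {x : H} (hxK : x ∈ K) (hx : x ≠ 0) {t : ℝ} (hSx : S x = (t : ℂ) • x) : 0 < t := by
  have hbound := hK x hxK
  rw [hS.tsum_eq_of_apply_eq_smul hSx] at hbound
  have hx2 : 0 < ‖x‖ ^ 2 := by positivity
  nlinarith

theorem eq_zero_of_apply_eq_zero (hS : IsFusionFrameOperator W c S) (hα : 0 < α)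
    (hK : ∀ x ∈ K, α * ‖x‖ ^ 2 ≤ ∑' i, c i ^ 2 * ‖(W i).starProjection x‖ ^ 2)
    {x : H} (hxK : x ∈ K) (hSx : S x = 0) : x = 0 := by
  by_contra hx
  exact lt_irrefl 0 (hS.pos_of_apply_eq_smul hα hK hxK hx (t := 0) (by simp [hSx]))

end LowerBound

theorem tsum_eq_of_le_eigenspace (hS : IsFusionFrameOperator W c S) {μ : I → ℝ}
    (hW : ∀ i, W i ≤ eigenspace (S : H →ₗ[ℂ] H) (μ i)) (t : ℝ) {x : H}
    (hx : x ∈ eigenspace (S : H →ₗ[ℂ] H) t) :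
    ∑' i : {i | μ i = t}, c i ^ 2 * ‖(W i).starProjection x‖ ^ 2 = t * ‖x‖ ^ 2 := by
  rw [tsum_subtype_eq_tsum_of_mem_orthogonal W c _ fun i hi => ?_,
    hS.tsum_eq_of_apply_eq_smul (mem_eigenspace_iff.1 hx)]
  have hne : (μ i : ℂ) ≠ t := fun h => hi (Complex.ofReal_injective h)
  exact Submodule.isOrtho_iff_le.1 (hS.isSymmetric.orthogonalFamily_eigenspaces.isOrtho hne).symm
    |>.trans (Submodule.orthogonal_le (hW i)) hx

theorem apply_eq_smul_of_tight (hS : IsFusionFrameOperator W c S) {s : Set I} {a : ℝ}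
    (horth : ∀ i ∉ s, (⨆ k ∈ s, W k).topologicalClosure ≤ (W i)ᗮ)
    (htight : ∀ x ∈ (⨆ k ∈ s, W k).topologicalClosure,
      ∑' i : s, c i ^ 2 * ‖(W i).starProjection x‖ ^ 2 = a * ‖x‖ ^ 2)
    {x : H} (hx : x ∈ (⨆ k ∈ s, W k).topologicalClosure) : S x = (a : ℂ) • x := by
  set V := (⨆ k ∈ s, W k).topologicalClosure
  have hSV : ∀ y ∈ V, S y ∈ V := fun y hy =>
    hS.apply_mem (Submodule.isClosed_topologicalClosure _) fun i => by
      by_cases hi : i ∈ s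
      · exact Submodule.le_topologicalClosure_biSup hi ((W i).starProjection_apply_mem y)
      · rw [(W i).starProjection_apply_eq_zero_iff.2 (horth i hi hy)]
        exact V.zero_mem
  refine apply_eq_smul_of_inner_self_eq (T := (S : H →ₗ[ℂ] H)) hSV (fun y hy => ?_) hx
  rw [coe_coe, hS.inner_self_eq_tsum,
    ← tsum_subtype_eq_tsum_of_mem_orthogonal W c s fun i hi => horth i hi hy, htight y hy,
    inner_smul_right, inner_self_eq_ofReal_norm_sq]
  push_cast
  rfl

end IsFusionFrameOperator

end FrameOperator

namespace IsFusionFrameOperator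

variable {H : Type*} [NormedAddCommGroup H] [InnerProductSpace ℂ H] [CompleteSpace H]
  {I : Type*} {W : I → Submodule ℂ H} [∀ i, (W i).HasOrthogonalProjection] {c : I → ℝ}
  {S G : H →L[ℂ] H} {K : Submodule ℂ H} [K.HasOrthogonalProjection] {α : ℝ}

theorem exists_pos_eigenvalue (hS : IsFusionFrameOperator W c S) (hα : 0 < α)
    (hK : ∀ x ∈ K, α * ‖x‖ ^ 2 ≤ ∑' i, c i ^ 2 * ‖(W i).starProjection x‖ ^ 2)
    (hG : IsRightInverseOn K S G) {i : I} (hWK : W i ≤ K) (hc : c i = 0 → W i = ⊥)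
    (hdual : ∃ d : ℝ, 0 ≤ d ∧ ∃ P : H →L[ℂ] H, IsIdempotentElem P ∧ IsSelfAdjoint P ∧
      (c i : ℂ) • ((W i).starProjection ∘L G) = (d : ℂ) • P) :
    ∃ μ : ℝ, 0 < μ ∧ W i ≤ eigenspace (S : H →ₗ[ℂ] H) μ := by
  by_cases hW0 : W i = ⊥
  · exact ⟨1, one_pos, hW0 ▸ bot_le⟩
  obtain ⟨d, -, P, hPidem, hPsa, hdual⟩ := hdual
  have hci : (c i : ℂ) ≠ 0 := Complex.ofReal_ne_zero.2 (mt hc hW0)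
  have hcomp : (W i).starProjection ∘L G = ((d / c i : ℝ) : ℂ) • P := by
    rw [Complex.ofReal_div, div_eq_inv_mul, ← smul_smul, ← hdual, smul_smul,
      inv_mul_cancel₀ hci, one_smul]
  have hGW : ∀ x ∈ W i, G x = ((d / c i : ℝ) : ℂ) • x := fun x hx =>
    apply_eq_smul_of_starProjection_comp_eq_smul (hG.isSymmetric hS.isSymmetric).isSelfAdjoint
      (fun y hy => hG.eq_zero_of_apply_eq_zero (hWK hy)) ⟨hPidem, hPsa⟩ hcomp hx
  have hSW : ∀ x ∈ W i, S x = (((d / c i)⁻¹ : ℝ) : ℂ) • x := fun x hx => by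
    rw [Complex.ofReal_inv]
    exact hG.apply_left_eq_inv_smul (hWK hx) (hGW x hx)
  obtain ⟨x, hx, hx0⟩ := Submodule.exists_mem_ne_zero_of_ne_bot hW0
  exact ⟨_, hS.pos_of_apply_eq_smul hα hK (hWK hx) hx0 (hSW x hx),
    fun y hy => mem_eigenspace_iff.2 (hSW y hy)⟩

theorem starProjection_comp_eq_of_tight (hS : IsFusionFrameOperator W c S) (hα : 0 < α)
    (hK : ∀ x ∈ K, α * ‖x‖ ^ 2 ≤ ∑' i, c i ^ 2 * ‖(W i).starProjection x‖ ^ 2)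
    (hG : IsRightInverseOn K S G) {s : Set I} (hsK : (⨆ k ∈ s, W k).topologicalClosure ≤ K)
    (horth : ∀ i ∉ s, (⨆ k ∈ s, W k).topologicalClosure ≤ (W i)ᗮ) {a : ℝ} (ha : 0 < a)
    (htight : ∀ x ∈ (⨆ k ∈ s, W k).topologicalClosure,
      ∑' i : s, c i ^ 2 * ‖(W i).starProjection x‖ ^ 2 = a * ‖x‖ ^ 2) {i : I} (hi : i ∈ s) :
    (W i).starProjection ∘L G = ((a⁻¹ : ℝ) : ℂ) • (W i).starProjection := by
  refine starProjection_comp_eq_smul_of_apply_eq_smul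
    (hG.isSymmetric hS.isSymmetric).isSelfAdjoint fun x hx => ?_
  have hxV := Submodule.le_topologicalClosure_biSup hi hx
  rw [Complex.ofReal_inv]
  exact hG.apply_right_eq_inv_smul (fun y hy => hS.eq_zero_of_apply_eq_zero hα hK hy)
    (hsK hxV) (Complex.ofReal_ne_zero.2 ha.ne') (hS.apply_eq_smul_of_tight horth htight hxV)

end IsFusionFrameOperator

theorem canonical_dual_fusion_iff_general {H : Type*}
    [NormedAddCommGroup H] [InnerProductSpace ℂ H] [CompleteSpace H]
    {I : Type*}
    (W : I → Submodule ℂ H) [∀ i, CompleteSpace (W i)]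
    (c : I → ℝ) (hc0 : ∀ i, 0 ≤ c i) (hc : ∀ i, c i = 0 ↔ W i = ⊥)
    (HW : Submodule ℂ H) [CompleteSpace HW]
    (hHW : HW = (⨆ i, W i).topologicalClosure)
    (α β : ℝ) (hα : 0 < α)
    (hframe : ∀ x ∈ HW,
      α * ‖x‖ ^ 2 ≤ ∑' i, (c i) ^ 2 * ‖proj (W i) x‖ ^ 2 ∧
      ∑' i, (c i) ^ 2 * ‖proj (W i) x‖ ^ 2 ≤ β * ‖x‖ ^ 2)
    (S : H →L[ℂ] H)
    (hS : ∀ x : H, HasSum (fun i => (((c i) ^ 2 : ℝ) : ℂ) • proj (W i) x) (S x))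
    (G : H →L[ℂ] H)
    (hGran : ∀ x : H, G x ∈ HW)
    (hGinv : ∀ x : H, S (G x) = proj HW x) :
    (∀ i, ∃ d : ℝ, 0 ≤ d ∧ ∃ P : H →L[ℂ] H, IsIdempotentElem P ∧ IsSelfAdjoint P ∧
        ((c i : ℝ) : ℂ) • ((proj (W i)).comp G) = (d : ℂ) • P) ↔
    (∃ (J : Type) (parts : J → Set I),
      (Pairwise fun j k => Disjoint (parts j) (parts k)) ∧
      (⋃ j, parts j) = Set.univ ∧
      (∀ j k, j ≠ k →
        (⨆ i ∈ parts j, W i).topologicalClosure ≤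
          ((⨆ i ∈ parts k, W i).topologicalClosure)ᗮ) ∧
      ∀ j, ∃ αj > 0, ∀ x ∈ (⨆ i ∈ parts j, W i).topologicalClosure,
        ∑' i : parts j, (c i.1) ^ 2 * ‖proj (W i.1) x‖ ^ 2 = αj * ‖x‖ ^ 2) := by
  have hS : IsFusionFrameOperator W c S := hS
  have hG : IsRightInverseOn HW S G := ⟨hGran, ext hGinv⟩
  have hlow : ∀ x ∈ HW, α * ‖x‖ ^ 2 ≤ ∑' i, c i ^ 2 * ‖(W i).starProjection x‖ ^ 2 :=
    fun x hx => (hframe x hx).1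
  have hWHW : ∀ s : Set I, (⨆ i ∈ s, W i).topologicalClosure ≤ HW := fun s =>
    hHW ▸ Submodule.topologicalClosure_mono (iSup₂_le fun i _ => le_iSup W i)
  constructor
  · intro hdual
    choose μ hμ hWμ using fun i => hS.exists_pos_eigenvalue hα hlow hG
      ((Submodule.le_topologicalClosure_biSup (Set.mem_univ i)).trans (hWHW _)) (hc i).1 (hdual i)
    have hV := topologicalClosure_biSup_le_eigenspace S hWμ
    refine ⟨{t : ℝ // 0 < t}, fun t => {i | μ i = t}, fun s t hst => ?_,
      Set.eq_univ_of_forall fun i => Set.mem_iUnion.2 ⟨⟨μ i, hμ i⟩, rfl⟩,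
      fun s t hst => ?_, fun t => ⟨t, t.2, fun x hx => hS.tsum_eq_of_le_eigenspace hWμ t (hV t hx)⟩⟩
    · exact Set.disjoint_left.2 fun i hs ht => hst (Subtype.ext (hs.symm.trans ht))
    · have hne : ((s : ℝ) : ℂ) ≠ (t : ℝ) := fun h => hst (Subtype.ext (Complex.ofReal_injective h))
      exact Submodule.isOrtho_iff_le.1
        ((hS.isSymmetric.orthogonalFamily_eigenspaces.isOrtho hne).mono (hV s) (hV t))
  · rintro ⟨J, parts, -, hcov, horth, htight⟩ i
    have hmem : ∀ k, ∃ j, k ∈ parts j := fun k => Set.mem_iUnion.1 (hcov ▸ Set.mem_univ k)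
    obtain ⟨j, hij⟩ := hmem i
    obtain ⟨a, ha, hjtight⟩ := htight j
    have horth' : ∀ k ∉ parts j, (⨆ i ∈ parts j, W i).topologicalClosure ≤ (W k)ᗮ :=
      fun k hk => by
        obtain ⟨j', hkj'⟩ := hmem k
        exact (horth j j' (by rintro rfl; exact hk hkj')).trans
          (Submodule.orthogonal_le (Submodule.le_topologicalClosure_biSup hkj'))
    refine ⟨c i / a, div_nonneg (hc0 i) ha.le, proj (W i),
      isStarProjection_starProjection.isIdempotentElem, isSelfAdjoint_starProjection _, ?_⟩
    rw [proj_eq_starProjection, hS.starProjection_comp_eq_of_tight hα hlow hG (hWHW _) horth' ha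
      hjtight hij, smul_smul, ← Complex.ofReal_mul, div_eq_mul_inv]

/-- For a fusion frame sequence `W = ((Wᵢ, cᵢ))`, the canonical dual of the associated
operator-valued frame sequence `(cᵢ P_{Wᵢ})` — namely `(cᵢ P_{Wᵢ} (S_W|H_W)⁻¹ P_W)ᵢ`,
where `G = (S_W|H_W)⁻¹ P_W` — corresponds again to a fusion frame sequence (each member
is a non-negative multiple of an orthogonal projection) if and only if `W` is a union of
mutually orthogonal tight fusion frame sequences. -/
theorem canonical_dual_fusion_iff {H : Type*}
    [NormedAddCommGroup H] [InnerProductSpace ℂ H] [CompleteSpace H]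
    {I : Type*} [Countable I]
    (W : I → Submodule ℂ H) [∀ i, CompleteSpace (W i)]
    (c : I → ℝ) (hc0 : ∀ i, 0 ≤ c i) (hc : ∀ i, c i = 0 ↔ W i = ⊥)
    (HW : Submodule ℂ H) [CompleteSpace HW]
    (hHW : HW = (⨆ i, W i).topologicalClosure)
    (α β : ℝ) (hα : 0 < α) (hβ : 0 < β)
    (hsum : ∀ x : H, Summable fun i => (c i) ^ 2 * ‖proj (W i) x‖ ^ 2)
    (hframe : ∀ x ∈ HW,
      α * ‖x‖ ^ 2 ≤ ∑' i, (c i) ^ 2 * ‖proj (W i) x‖ ^ 2 ∧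
      ∑' i, (c i) ^ 2 * ‖proj (W i) x‖ ^ 2 ≤ β * ‖x‖ ^ 2)
    (S : H →L[ℂ] H)
    (hS : ∀ x : H, HasSum (fun i => (((c i) ^ 2 : ℝ) : ℂ) • proj (W i) x) (S x))
    (G : H →L[ℂ] H)
    (hGran : ∀ x : H, G x ∈ HW)
    (hGinv : ∀ x : H, S (G x) = proj HW x)
    (hGker : ∀ x ∈ HWᗮ, G x = 0) :
    (∀ i, ∃ d : ℝ, 0 ≤ d ∧ ∃ P : H →L[ℂ] H, IsIdempotentElem P ∧ IsSelfAdjoint P ∧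
        ((c i : ℝ) : ℂ) • ((proj (W i)).comp G) = (d : ℂ) • P) ↔
    (∃ (J : Type) (parts : J → Set I),
      (Pairwise fun j k => Disjoint (parts j) (parts k)) ∧
      (⋃ j, parts j) = Set.univ ∧
      (∀ j k, j ≠ k →
        (⨆ i ∈ parts j, W i).topologicalClosure ≤
          ((⨆ i ∈ parts k, W i).topologicalClosure)ᗮ) ∧
      ∀ j, ∃ αj > 0, ∀ x ∈ (⨆ i ∈ parts j, W i).topologicalClosure,
        ∑' i : parts j, (c i.1) ^ 2 * ‖proj (W i.1) x‖ ^ 2 = αj * ‖x‖ ^ 2) :=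
  canonical_dual_fusion_iff_general W c hc0 hc HW hHW α β hα hframe S hS G hGran hGinv
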